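/- Let k be a real number, n ≥ 1 an integer with n + k ≠ 0, and g : ℝ → ℂ a differentiable function with (T^k g)(x) = (n+k)·g(x) for all x ≠ 0, and suppose g is not identically zero on ℝ \ {0}. Let B ∈ ℂ and set F(x) := g(−x) + B·g(x). If (T^k F)(x) = −(n+k)·F(x) for all x ≠ 0, then B = k/(n+k). -/

import Mathlib

/-!
The reflected function `x ↦ g (-x)` satisfies `T^k (g ∘ neg) (x) = -(T^k g)(-x) - 2k g(x)`,
because the two kernels `1 / (1 - e^{∓2x})` sum to `1`. Hence for a `(n+k)`-eigenfunction `g`,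
`T^k F + (n+k) F = (2B(n+k) - 2k) g`, and `g ≠ 0` at some point forces `B (n+k) = k`.
-/

open Complex

/-- The Cherednik operator `T^k` of rank one, acting on functions `g : ℝ → ℂ`. -/
noncomputable def cherednik (k : ℝ) (g : ℝ → ℂ) (x : ℝ) : ℂ :=
  deriv g x + 2 * (k : ℂ) * (g x - g (-x)) / (1 - Complex.exp (-2 * (x : ℂ)))
    - (k : ℂ) * g x

lemma one_div_one_sub_add_one_div_one_sub_inv {K : Type*} [Field K] {w : K}
    (hw₀ : w ≠ 0) (hw₁ : w ≠ 1) : 1 / (1 - w) + 1 / (1 - w⁻¹) = 1 := by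
  have h₁ : 1 - w ≠ 0 := sub_ne_zero.mpr hw₁.symm
  have h₂ : 1 - w⁻¹ ≠ 0 := sub_ne_zero.mpr (by simpa [eq_comm] using hw₁)
  field_simp
  ring

lemma exp_neg_two_mul_ofReal_ne_one {x : ℝ} (hx : x ≠ 0) : cexp (-2 * x) ≠ 1 := by
  rw [← ofReal_ofNat, ← ofReal_neg, ← ofReal_mul, ← ofReal_exp, ne_eq, ofReal_eq_one,
    Real.exp_eq_one_iff]
  simpa using hx

lemma one_div_one_sub_exp_add_one_div_one_sub_exp_neg {x : ℝ} (hx : x ≠ 0) :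
    1 / (1 - cexp (-2 * x)) + 1 / (1 - cexp (-2 * ((-x : ℝ) : ℂ))) = 1 := by
  have hinv : cexp (-2 * ((-x : ℝ) : ℂ)) = (cexp (-2 * x))⁻¹ := by
    rw [← exp_neg]; push_cast; ring_nf
  rw [hinv]
  exact one_div_one_sub_add_one_div_one_sub_inv (exp_ne_zero _)
    (exp_neg_two_mul_ofReal_ne_one hx)

section cherednik

variable {k : ℝ} {f g : ℝ → ℂ} {x : ℝ}

lemma cherednik_add (hf : DifferentiableAt ℝ f x) (hg : DifferentiableAt ℝ g x) :
    cherednik k (fun y => f y + g y) x = cherednik k f x + cherednik k g x := by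
  simp only [cherednik, deriv_fun_add hf hg]
  ring

lemma cherednik_const_mul (c : ℂ) (hg : DifferentiableAt ℝ g x) :
    cherednik k (fun y => c * g y) x = c * cherednik k g x := by
  simp only [cherednik, deriv_const_mul c hg]
  ring

lemma cherednik_comp_neg (hx : x ≠ 0) :
    cherednik k (fun y => g (-y)) x = -cherednik k g (-x) - 2 * k * g x := by
  have hsum := one_div_one_sub_exp_add_one_div_one_sub_exp_neg hx
  simp only [cherednik, deriv_comp_neg, neg_neg]
  linear_combination 2 * (k : ℂ) * (g (-x) - g x) * hsum

end cherednik

theorem negative_index_coefficient_general (k : ℝ) (n : ℤ)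
    (hnk : (n : ℝ) + k ≠ 0) (g : ℝ → ℂ) (hg : Differentiable ℝ g)
    (heig : ∀ x : ℝ, x ≠ 0 → cherednik k g x = ((n : ℂ) + (k : ℂ)) * g x)
    (hne : ∃ x : ℝ, x ≠ 0 ∧ g x ≠ 0)
    (B : ℂ) (F : ℝ → ℂ) (hF : ∀ x : ℝ, F x = g (-x) + B * g x)
    (heigF : ∀ x : ℝ, x ≠ 0 → cherednik k F x = -((n : ℂ) + (k : ℂ)) * F x) :
    B = (k : ℂ) / ((n : ℂ) + (k : ℂ)) := by
  obtain ⟨x, hx, hgx⟩ := hne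
  have hnk' : (n : ℂ) + (k : ℂ) ≠ 0 := by exact_mod_cast hnk
  obtain rfl : F = fun y => g (-y) + B * g y := funext hF
  have hTF : cherednik k (fun y => g (-y) + B * g y) x
      = -((n : ℂ) + k) * g (-x) - 2 * k * g x + B * (((n : ℂ) + k) * g x) := by
    rw [cherednik_add (f := fun y => g (-y)) ((hg _).comp x (hasDerivAt_neg x).differentiableAt)
        ((hg x).const_mul B), cherednik_comp_neg hx, cherednik_const_mul B (hg x),
      heig x hx, heig (-x) (neg_ne_zero.mpr hx)]
    ring
  have hkey : (2 * (B * ((n : ℂ) + k) - k)) * g x = 0 := by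
    linear_combination hTF.symm.trans (heigF x hx)
  rw [eq_div_iff hnk', ← sub_eq_zero]
  simpa [hgx] using hkey

theorem negative_index_coefficient (k : ℝ) (n : ℤ) (hn : 1 ≤ n)
    (hnk : (n : ℝ) + k ≠ 0) (g : ℝ → ℂ) (hg : Differentiable ℝ g)
    (heig : ∀ x : ℝ, x ≠ 0 → cherednik k g x = ((n : ℂ) + (k : ℂ)) * g x)
    (hne : ∃ x : ℝ, x ≠ 0 ∧ g x ≠ 0)
    (B : ℂ) (F : ℝ → ℂ) (hF : ∀ x : ℝ, F x = g (-x) + B * g x)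
    (heigF : ∀ x : ℝ, x ≠ 0 → cherednik k F x = -((n : ℂ) + (k : ℂ)) * F x) :
    B = (k : ℂ) / ((n : ℂ) + (k : ℂ)) :=
  negative_index_coefficient_general k n hnk g hg heig hne B F hF heigF
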